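/- arXiv:1008.2933 — 7 statements merged into one kernel-verified Lean document; each statement's English description precedes it below -/
import Mathlib

section
/- For every reflection coefficient Γ > 0, every wavenumber k' > 0 and every length L > 0, there exist a loss coefficient α > 0 and a threshold T > 0 such that, setting k = k' + iα, c = Γ·exp(−αL) and u(x) = exp(i k x) + c·exp(−i k (x − L)), the super-level set {x ∈ [0, L] : |u(x)| > T} is a connected subset of ℝ and contains the point 0. -/
/-!
Write `u = a e^{iφ} + b e^{iψ}` with real amplitudes `a = e^{-αx}` (incident wave) and
`b = Γ e^{α(x - 2L)}` (reflected wave), so that `|u|² = a² + b² + 2ab cos (k'(2x - L))`, where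
`ab = Γ e^{-2αL}` does not depend on `x`. Hence `(|u|²)' = 2α(b² - a²) - 4k'ab sin (k'(2x - L))`.
For large loss `α` the reflected wave is at most half the incident one on `[0, L/2]`, so `|u|`
decreases there, while `|u| ≤ 1/2 < |u(0)|` on `[L/2, L]`. The super-level set at `1/2` is
therefore an initial segment of `[0, L/2]`.
-/

/-- The interfering traveling-wave field
`u(x) = exp(i k x) + c · exp(−i k (x − L))` with `k = k' + iα` and
`c = Γ · exp(−αL)`. -/
noncomputable def travelingField (Γ k' L α x : ℝ) : ℂ :=
  Complex.exp (Complex.I * ((k' : ℂ) + (α : ℂ) * Complex.I) * (x : ℂ)) +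
    ((Γ * Real.exp (-α * L) : ℝ) : ℂ) *
      Complex.exp (-(Complex.I * ((k' : ℂ) + (α : ℂ) * Complex.I) * ((x : ℂ) - (L : ℂ))))

open Set Filter Topology

theorem Set.ordConnected_superlevel_of_antitoneOn {α β : Type*} [LinearOrder α] [Preorder β]
    {f : α → β} {a m b : α} {t : β} (hf : AntitoneOn f (Icc a m))
    (hle : ∀ x ∈ Icc m b, f x ≤ t) : OrdConnected {x | x ∈ Icc a b ∧ t < f x} := by
  have hm : ∀ x ∈ {x | x ∈ Icc a b ∧ t < f x}, x ≤ m := fun x ⟨hx, hfx⟩ =>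
    le_of_not_ge fun hmx => (hfx.trans_le (hle x ⟨hmx, hx.2⟩)).false
  refine ⟨fun x hx y hy z hz => ⟨⟨hx.1.1.trans hz.1, hz.2.trans hy.1.2⟩, hy.2.trans_le ?_⟩⟩
  exact hf ⟨hx.1.1.trans hz.1, hz.2.trans (hm y hy)⟩ ⟨hx.1.1.trans (hz.1.trans hz.2), hm y hy⟩ hz.2

theorem Complex.norm_sq_ofReal_mul_exp_add (a b φ ψ : ℝ) :
    ‖(a : ℂ) * exp (φ * I) + b * exp (ψ * I)‖ ^ 2 =
      a ^ 2 + b ^ 2 + 2 * a * b * Real.cos (φ - ψ) := by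
  rw [Complex.sq_norm, normSq_apply]
  simp only [add_re, add_im, re_ofReal_mul, im_ofReal_mul, exp_ofReal_mul_I_re,
    exp_ofReal_mul_I_im, Real.cos_sub]
  linear_combination a ^ 2 * Real.sin_sq_add_cos_sq φ + b ^ 2 * Real.sin_sq_add_cos_sq ψ

theorem interference_deriv_nonpos {α k' a b s : ℝ} (hk' : 2 * |k'| ≤ α) (hb : 2 * |b| ≤ a)
    (hs : |s| ≤ 1) : 2 * α * (b ^ 2 - a ^ 2) - 4 * k' * (a * b) * s ≤ 0 := by
  have hα : 0 ≤ α := le_trans (by positivity) hk'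
  have ha : 0 ≤ a := le_trans (by positivity) hb
  have hb2 : 4 * b ^ 2 ≤ a ^ 2 := by nlinarith [sq_abs b, abs_nonneg b]
  have hcross : |k' * (a * b) * s| ≤ |k'| * (a * |b|) := by
    rw [abs_mul, abs_mul, abs_mul, abs_of_nonneg ha]
    exact mul_le_of_le_one_right (by positivity) hs
  nlinarith [neg_abs_le (k' * (a * b) * s), mul_le_mul_of_nonneg_left hb2 hα,
    mul_le_mul_of_nonneg_right hk' (by positivity : 0 ≤ a * |b|),
    mul_le_mul_of_nonneg_left hb (by positivity : 0 ≤ α * a)]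

section

open Complex

variable (Γ k' L α x : ℝ)

theorem travelingField_eq_polar :
    travelingField Γ k' L α x =
      (Real.exp (-(α * x)) : ℂ) * exp ((k' * x : ℝ) * I) +
        ((Γ * Real.exp (α * (x - 2 * L)) : ℝ) : ℂ) * exp ((-(k' * (x - L)) : ℝ) * I) := by
  have hb : Real.exp (α * (x - 2 * L)) = Real.exp (-α * L) * Real.exp (α * (x - L)) := by
    rw [← Real.exp_add]; ring_nf
  simp only [travelingField, hb, ofReal_mul, ofReal_exp, mul_assoc, ← Complex.exp_add]
  congr 3 <;> push_cast
  · linear_combination (α * x) * I_sq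
  · linear_combination (-(α * (x - L))) * I_sq

theorem norm_travelingField_sq :
    ‖travelingField Γ k' L α x‖ ^ 2 =
      Real.exp (-(α * x)) ^ 2 + (Γ * Real.exp (α * (x - 2 * L))) ^ 2 +
        2 * Real.exp (-(α * x)) * (Γ * Real.exp (α * (x - 2 * L))) *
          Real.cos (k' * (2 * x - L)) := by
  rw [travelingField_eq_polar, norm_sq_ofReal_mul_exp_add]
  ring_nf

theorem norm_travelingField_le :
    ‖travelingField Γ k' L α x‖ ≤ Real.exp (-(α * x)) + |Γ| * Real.exp (α * (x - 2 * L)) := by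
  rw [travelingField_eq_polar]
  refine (norm_add_le _ _).trans_eq ?_
  simp only [norm_mul, norm_exp_ofReal_mul_I, norm_real, Real.norm_eq_abs, Real.abs_exp, mul_one]

theorem le_norm_travelingField :
    Real.exp (-(α * x)) - |Γ| * Real.exp (α * (x - 2 * L)) ≤ ‖travelingField Γ k' L α x‖ := by
  rw [travelingField_eq_polar]
  refine le_of_eq_of_le ?_ (norm_sub_le_norm_add _ _)
  simp only [norm_mul, norm_exp_ofReal_mul_I, norm_real, Real.norm_eq_abs, Real.abs_exp, mul_one]

theorem hasDerivAt_norm_travelingField_sq :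
    HasDerivAt (fun y => ‖travelingField Γ k' L α y‖ ^ 2)
      (2 * α * ((Γ * Real.exp (α * (x - 2 * L))) ^ 2 - Real.exp (-(α * x)) ^ 2) -
        4 * k' * (Real.exp (-(α * x)) * (Γ * Real.exp (α * (x - 2 * L)))) *
          Real.sin (k' * (2 * x - L))) x := by
  have ha : HasDerivAt (fun y => Real.exp (-(α * y))) (-α * Real.exp (-(α * x))) x := by
    simpa [mul_comm] using ((hasDerivAt_id x).const_mul α).neg.exp
  have hb : HasDerivAt (fun y => Γ * Real.exp (α * (y - 2 * L)))
      (α * (Γ * Real.exp (α * (x - 2 * L)))) x :=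
    ((((hasDerivAt_id x).sub_const (2 * L)).const_mul α).exp.const_mul Γ).congr_deriv
      (by simp; ring)
  have hθ : HasDerivAt (fun y => k' * (2 * y - L)) (2 * k') x :=
    ((((hasDerivAt_id x).const_mul 2).sub_const L).const_mul k').congr_deriv
      (by simp [mul_comm])
  simp_rw [norm_travelingField_sq]
  exact ((ha.pow 2).add (hb.pow 2) |>.add ((ha.const_mul 2).mul hb |>.mul hθ.cos)).congr_deriv
    (by simp only [Pi.mul_apply]; ring)

end

section

variable {Γ k' L α : ℝ}

theorem antitoneOn_norm_travelingField (hk' : 2 * |k'| ≤ α)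
    (hΓ : 2 * |Γ| * Real.exp (-(α * L)) ≤ 1) :
    AntitoneOn (fun x => ‖travelingField Γ k' L α x‖) (Icc 0 (L / 2)) := by
  have hα : 0 ≤ α := le_trans (by positivity) hk'
  have hderiv := hasDerivAt_norm_travelingField_sq Γ k' L α
  have hsq : AntitoneOn (fun x => ‖travelingField Γ k' L α x‖ ^ 2) (Icc 0 (L / 2)) := by
    refine antitoneOn_of_deriv_nonpos (convex_Icc 0 (L / 2))
      (HasDerivAt.continuousOn fun x _ => hderiv x)
      (fun x _ => (hderiv x).differentiableAt.differentiableWithinAt) fun x hx => ?_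
    rw [interior_Icc] at hx
    rw [(hderiv x).deriv]
    refine interference_deriv_nonpos hk' ?_ (Real.abs_sin_le_one _)
    calc 2 * |Γ * Real.exp (α * (x - 2 * L))|
        = 2 * |Γ| * Real.exp (-(α * L)) * Real.exp (α * (x - L)) := by
          rw [abs_mul, Real.abs_exp, mul_assoc, ← Real.exp_add]; ring_nf
      _ ≤ 1 * Real.exp (-(α * x)) := by
          gcongr
          nlinarith [hx.2]
      _ = Real.exp (-(α * x)) := one_mul _
  exact fun x hx y hy hxy => (sq_le_sq₀ (norm_nonneg _) (norm_nonneg _)).1 (hsq hx hy hxy)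

theorem norm_travelingField_le_of_mem_Icc (hα : 0 ≤ α) {x : ℝ} (hx : x ∈ Icc (L / 2) L) :
    ‖travelingField Γ k' L α x‖ ≤ (1 + |Γ|) * Real.exp (-(α * (L / 2))) := by
  have hinc : Real.exp (-(α * x)) ≤ Real.exp (-(α * (L / 2))) :=
    Real.exp_le_exp.2 (by nlinarith [hx.1])
  have href : Real.exp (α * (x - 2 * L)) ≤ Real.exp (-(α * (L / 2))) :=
    Real.exp_le_exp.2 (by nlinarith [hx.1, hx.2])
  calc ‖travelingField Γ k' L α x‖ ≤ Real.exp (-(α * x)) + |Γ| * Real.exp (α * (x - 2 * L)) :=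
        norm_travelingField_le Γ k' L α x
    _ ≤ (1 + |Γ|) * Real.exp (-(α * (L / 2))) := by
        rw [add_mul, one_mul]; gcongr

theorem one_sub_le_norm_travelingField_zero (hα : 0 ≤ α) (hL : 0 ≤ L) :
    1 - |Γ| * Real.exp (-(α * (L / 2))) ≤ ‖travelingField Γ k' L α 0‖ := by
  have href : Real.exp (α * (0 - 2 * L)) ≤ Real.exp (-(α * (L / 2))) :=
    Real.exp_le_exp.2 (by nlinarith)
  calc 1 - |Γ| * Real.exp (-(α * (L / 2)))
      ≤ Real.exp (-(α * 0)) - |Γ| * Real.exp (α * (0 - 2 * L)) := by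
        rw [mul_zero, neg_zero, Real.exp_zero]; gcongr
    _ ≤ ‖travelingField Γ k' L α 0‖ := le_norm_travelingField Γ k' L α 0

end

theorem traveling_interference_connected_superlevel_general
    (Γ k' L : ℝ) (hL : 0 < L) :
    ∃ α T : ℝ, 0 < α ∧ 0 < T ∧
      IsConnected {x : ℝ | x ∈ Set.Icc 0 L ∧ T < ‖travelingField Γ k' L α x‖} ∧
      (0 : ℝ) ∈ {x : ℝ | x ∈ Set.Icc 0 L ∧ T < ‖travelingField Γ k' L α x‖} := by
  obtain ⟨α, hα, hk', hsmall⟩ : ∃ α : ℝ, 0 < α ∧ 2 * |k'| ≤ α ∧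
      (1 + |Γ|) * Real.exp (-(α * (L / 2))) ≤ 1 / 2 := by
    have hlim : Tendsto (fun α => (1 + |Γ|) * Real.exp (-(α * (L / 2)))) atTop (𝓝 0) := by
      simpa using (Real.tendsto_exp_neg_atTop_nhds_zero.comp
        (tendsto_id.atTop_mul_const (half_pos hL))).const_mul (1 + |Γ|)
    exact ((eventually_gt_atTop 0).and ((eventually_ge_atTop _).and
      (hlim.eventually (ge_mem_nhds one_half_pos)))).exists
  have hη := Real.exp_pos (-(α * (L / 2)))
  have hΓ : 2 * |Γ| * Real.exp (-(α * L)) ≤ 1 := by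
    have : Real.exp (-(α * L)) ≤ Real.exp (-(α * (L / 2))) := Real.exp_le_exp.2 (by nlinarith)
    nlinarith [abs_nonneg Γ]
  have h0 : (0 : ℝ) ∈ {x : ℝ | x ∈ Icc 0 L ∧ 1 / 2 < ‖travelingField Γ k' L α x‖} :=
    ⟨⟨le_rfl, hL.le⟩, by
      linarith [one_sub_le_norm_travelingField_zero (Γ := Γ) (k' := k') hα.le hL.le]⟩
  refine ⟨α, 1 / 2, hα, one_half_pos, ⟨⟨0, h0⟩, ?_⟩, h0⟩
  exact (ordConnected_superlevel_of_antitoneOn (antitoneOn_norm_travelingField hk' hΓ)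
    fun x hx => (norm_travelingField_le_of_mem_Icc hα.le hx).trans hsmall).isPreconnected

/-- For every reflection coefficient `Γ > 0`, wavenumber `k' > 0` and length `L > 0`,
there exist a loss coefficient `α > 0` and a threshold `T > 0` such that the
super-level set `{x ∈ [0, L] : |u(x)| > T}` is a connected subset of `ℝ`
containing `0`. -/
theorem traveling_interference_connected_superlevel
    (Γ k' L : ℝ) (hΓ : 0 < Γ) (hk' : 0 < k') (hL : 0 < L) :
    ∃ α T : ℝ, 0 < α ∧ 0 < T ∧
      IsConnected {x : ℝ | x ∈ Set.Icc 0 L ∧ T < ‖travelingField Γ k' L α x‖} ∧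
      (0 : ℝ) ∈ {x : ℝ | x ∈ Set.Icc 0 L ∧ T < ‖travelingField Γ k' L α x‖} :=
  traveling_interference_connected_superlevel_general Γ k' L hL
end

section
/- Fix integers n ≥ 1 and m ≥ 0 and set d = m + 2n. Define 6×6 real matrices A and B and a 6×m real matrix D as follows: A has (2/d) in entries (2,1), (2,2), (3,1), (3,2) and zeros elsewhere; B has rows (1, 0, −1, 0, 0, 0), ((2−d)/d, 2/d, 0, −1, 0, 0), (2/d, (2−d)/d, 0, 0, −1, 0), (0, 1, 0, −1, 0, 0), (0, 0, 1, 0, −1, 0), (0, 0, 0, 1, 0, −1); D has every entry of rows 2 and 3 equal to 2/d and zeros elsewhere. Let δ be the (6n) × (m + 6n) real block matrix whose i-th block row (1 ≤ i ≤ n) is [D, A, …, A, B, A, …, A] with the block B in the i-th of the n loop-column positions. Then rank δ = 5n if m ≥ 1, and rank δ = 5n − 1 if m = 0. Consequently the kernel of δ has dimension m + n when m ≥ 1 and dimension n + 1 when m = 0, and the cokernel of δ has dimension n when m ≥ 1 and dimension n + 1 when m = 0. -/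
open Matrix

/-- The 6×6 block `A`: entries `(2,1), (2,2), (3,1), (3,2)` (1-indexed) equal `2/d`,
all other entries zero. -/
noncomputable def Ablock (d : ℝ) : Matrix (Fin 6) (Fin 6) ℝ :=
  Matrix.of fun r c => if (r = 1 ∨ r = 2) ∧ (c = 0 ∨ c = 1) then 2 / d else 0

/-- The 6×6 block `B` with the rows listed in the statement. -/
noncomputable def Bblock (d : ℝ) : Matrix (Fin 6) (Fin 6) ℝ :=
  !![1, 0, -1, 0, 0, 0;
     (2 - d) / d, 2 / d, 0, -1, 0, 0;
     2 / d, (2 - d) / d, 0, 0, -1, 0;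
     0, 1, 0, -1, 0, 0;
     0, 0, 1, 0, -1, 0;
     0, 0, 0, 1, 0, -1]

/-- The 6×m block `D`: every entry of rows 2 and 3 (1-indexed) equals `2/d`,
all other entries zero. -/
noncomputable def Dblock (m : ℕ) (d : ℝ) : Matrix (Fin 6) (Fin m) ℝ :=
  Matrix.of fun r _ => if r = 1 ∨ r = 2 then 2 / d else 0

/-- The `(6n) × (m + 6n)` Čech coboundary matrix `δ` whose `i`-th block row is
`[D, A, …, A, B, A, …, A]` with the block `B` in the `i`-th of the `n` loop-column
positions, where `d = m + 2n`. -/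
noncomputable def cechCoboundary (n m : ℕ) :
    Matrix (Fin n × Fin 6) (Fin m ⊕ Fin n × Fin 6) ℝ :=
  Matrix.of fun p q =>
    match q with
    | Sum.inl j => Dblock m ((m : ℝ) + 2 * n) p.2 j
    | Sum.inr (i, s) =>
        if p.1 = i then Bblock ((m : ℝ) + 2 * n) p.2 s
        else Ablock ((m : ℝ) + 2 * n) p.2 s

/-!
Write `d = m + 2n`. Every diagonal block splits as `B = A + L` with `L` independent of `d`,
and the blocks `A` and `D` see a cochain only through the total
`S = ∑ⱼ wⱼ + ∑ᵢ (uᵢ₀ + uᵢ₁)` of its open-edge values `w` and loop values `uᵢ`: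
the `i`-th block row of `δ v` is `L uᵢ + (2S/d) e` with `e = (0,1,1,0,0,0)`.
Solving `L u = -c e` forces `u = (a, c-a, a, c-a, a, c-a)`, so the kernel of `δ` is the
injective image (for `n ≥ 1`) of those `(w, a, c) ∈ ℝᵐ × ℝⁿ × ℝ` with `c = 2S/d`, i.e.
`m c = 2 ∑ⱼ wⱼ`. That balance condition is a nonzero functional exactly when `m ≥ 1`, which
gives `dim ker δ`; rank and cokernel then follow from rank–nullity.
-/

namespace CechCoboundary

def loopBlock : Matrix (Fin 6) (Fin 6) ℝ :=
  !![1, 0, -1, 0, 0, 0;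
     -1, 0, 0, -1, 0, 0;
     0, -1, 0, 0, -1, 0;
     0, 1, 0, -1, 0, 0;
     0, 0, 1, 0, -1, 0;
     0, 0, 0, 1, 0, -1]

theorem Bblock_eq_Ablock_add_loopBlock {d : ℝ} (hd : d ≠ 0) :
    Bblock d = Ablock d + loopBlock := by
  ext r s
  fin_cases r <;> fin_cases s <;>
    simp [Bblock, Ablock, loopBlock, sub_eq_add_neg, add_div, neg_div, div_self hd]

def vertexRows : Fin 6 → ℝ := ![0, 1, 1, 0, 0, 0]

def loopProfile (a c : ℝ) : Fin 6 → ℝ := ![a, c - a, a, c - a, a, c - a]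

theorem loopBlock_mulVec (u : Fin 6 → ℝ) :
    loopBlock *ᵥ u = ![u 0 - u 2, -u 0 - u 3, -u 1 - u 4, u 1 - u 3, u 2 - u 4, u 3 - u 5] := by
  ext r
  fin_cases r <;> simp [loopBlock, mulVec, dotProduct, Fin.sum_univ_six, sub_eq_add_neg]

theorem loopBlock_mulVec_eq_iff (u : Fin 6 → ℝ) (c : ℝ) :
    loopBlock *ᵥ u = (-c) • vertexRows ↔ u = loopProfile (u 0) c := by
  constructor
  · intro h
    obtain ⟨h0, h1, -, h3, h4, h5⟩ : u 0 - u 2 = 0 ∧ -u 0 - u 3 = -c ∧ -u 1 - u 4 = -c ∧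
        u 1 - u 3 = 0 ∧ u 2 - u 4 = 0 ∧ u 3 - u 5 = 0 := by
      simpa [loopBlock_mulVec, vertexRows] using h
    ext s
    fin_cases s
    exacts [rfl, (by linarith : u 1 = c - u 0), (by linarith : u 2 = u 0),
      (by linarith : u 3 = c - u 0), (by linarith : u 4 = u 0), (by linarith : u 5 = c - u 0)]
  · intro h
    rw [h, loopBlock_mulVec]
    simp [loopProfile, vertexRows, sub_sub_eq_add_sub]

theorem Ablock_mulVec (d : ℝ) (u : Fin 6 → ℝ) :
    Ablock d *ᵥ u = (2 / d * (u 0 + u 1)) • vertexRows := by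
  ext r
  fin_cases r <;> simp [Ablock, vertexRows, mulVec, dotProduct, Fin.sum_univ_six, mul_add]

theorem Dblock_mulVec (m : ℕ) (d : ℝ) (w : Fin m → ℝ) :
    Dblock m d *ᵥ w = (2 / d * ∑ j, w j) • vertexRows := by
  ext r
  fin_cases r <;> simp [Dblock, vertexRows, mulVec, dotProduct, Finset.mul_sum]

variable {n m : ℕ}

def vertexSum (v : Fin m ⊕ Fin n × Fin 6 → ℝ) : ℝ :=
  (∑ j, v (Sum.inl j)) + ∑ i, (v (Sum.inr (i, 0)) + v (Sum.inr (i, 1)))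

def loopPart (v : Fin m ⊕ Fin n × Fin 6 → ℝ) (i : Fin n) : Fin 6 → ℝ :=
  fun s => v (Sum.inr (i, s))

theorem cechCoboundary_mulVec (hd : (m : ℝ) + 2 * n ≠ 0) (v : Fin m ⊕ Fin n × Fin 6 → ℝ)
    (i : Fin n) (r : Fin 6) :
    (cechCoboundary n m *ᵥ v) (i, r) =
      (loopBlock *ᵥ loopPart v i) r + 2 / ((m : ℝ) + 2 * n) * vertexSum v * vertexRows r := by
  set d : ℝ := (m : ℝ) + 2 * n
  have hrow : (cechCoboundary n m *ᵥ v) (i, r) = (Dblock m d *ᵥ fun j => v (Sum.inl j)) r +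
      ∑ i', ∑ s, (if i = i' then Bblock d r s else Ablock d r s) * v (Sum.inr (i', s)) := by
    rw [mulVec, dotProduct, Fintype.sum_sum_type, Fintype.sum_prod_type]
    rfl
  have hloop : ∀ i', ∑ s, (if i = i' then Bblock d r s else Ablock d r s) * v (Sum.inr (i', s)) =
      (Ablock d *ᵥ loopPart v i') r + if i = i' then (loopBlock *ᵥ loopPart v i) r else 0 := by
    intro i'
    split_ifs with h
    · subst h
      simp only [Bblock_eq_Ablock_add_loopBlock hd, Matrix.add_apply, add_mul,
        Finset.sum_add_distrib, mulVec, dotProduct, loopPart]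
    · simp only [mulVec, dotProduct, loopPart, add_zero]
  rw [hrow, Finset.sum_congr rfl fun i' _ => hloop i', Finset.sum_add_distrib, Finset.sum_ite_eq,
    if_pos (Finset.mem_univ _), Dblock_mulVec]
  simp only [Ablock_mulVec, vertexSum, loopPart, Pi.smul_apply, smul_eq_mul, ← Finset.sum_mul,
    ← Finset.mul_sum]
  ring

theorem cechCoboundary_mulVec_eq_zero_iff (hd : (m : ℝ) + 2 * n ≠ 0)
    (v : Fin m ⊕ Fin n × Fin 6 → ℝ) :
    cechCoboundary n m *ᵥ v = 0 ↔ ∀ i, loopPart v i =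
      loopProfile (loopPart v i 0) (2 / ((m : ℝ) + 2 * n) * vertexSum v) := by
  simp only [funext_iff (f := cechCoboundary n m *ᵥ v), Prod.forall, Pi.zero_apply,
    cechCoboundary_mulVec hd, add_eq_zero_iff_eq_neg]
  refine forall_congr' fun i => ?_
  rw [← loopBlock_mulVec_eq_iff, funext_iff]
  simp only [Pi.smul_apply, smul_eq_mul, neg_mul]

def kernelParam (n m : ℕ) : (Fin m → ℝ) × (Fin n → ℝ) × ℝ →ₗ[ℝ] (Fin m ⊕ Fin n × Fin 6 → ℝ) where
  toFun x := Sum.elim x.1 fun p => loopProfile (x.2.1 p.1) x.2.2 p.2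
  map_add' x y := by
    ext (j | ⟨i, s⟩)
    · rfl
    · fin_cases s <;> simp [loopProfile, add_sub_add_comm]
  map_smul' c x := by
    ext (j | ⟨i, s⟩)
    · rfl
    · fin_cases s <;> simp [loopProfile, mul_sub]

theorem loopPart_kernelParam (x : (Fin m → ℝ) × (Fin n → ℝ) × ℝ) (i : Fin n) :
    loopPart (kernelParam n m x) i = loopProfile (x.2.1 i) x.2.2 := rfl

theorem vertexSum_kernelParam (x : (Fin m → ℝ) × (Fin n → ℝ) × ℝ) :
    vertexSum (kernelParam n m x) = ∑ j, x.1 j + n * x.2.2 := by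
  simp [vertexSum, kernelParam, loopProfile]

theorem kernelParam_injective (hn : 0 < n) : Function.Injective (kernelParam n m) := by
  intro x y h
  have hv := congrFun h
  have ha : ∀ i, x.2.1 i = y.2.1 i := fun i => hv (Sum.inr (i, 0))
  have hc : x.2.2 - x.2.1 ⟨0, hn⟩ = y.2.2 - y.2.1 ⟨0, hn⟩ := hv (Sum.inr (⟨0, hn⟩, 1))
  refine Prod.ext (funext fun j => hv (Sum.inl j)) (Prod.ext (funext ha) ?_)
  linarith [ha ⟨0, hn⟩]

def kernelConstraint (n m : ℕ) : (Fin m → ℝ) × (Fin n → ℝ) × ℝ →ₗ[ℝ] ℝ where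
  toFun x := m * x.2.2 - 2 * ∑ j, x.1 j
  map_add' x y := by
    simp only [Prod.snd_add, Prod.fst_add, Pi.add_apply, Finset.sum_add_distrib]
    ring
  map_smul' c x := by
    simp only [Prod.smul_fst, Prod.smul_snd, Pi.smul_apply, smul_eq_mul, RingHom.id_apply,
      ← Finset.mul_sum]
    ring

theorem eq_two_div_mul_add_iff (hd : (m : ℝ) + 2 * n ≠ 0) (W c : ℝ) :
    c = 2 / ((m : ℝ) + 2 * n) * (W + n * c) ↔ m * c - 2 * W = 0 := by
  rw [div_mul_eq_mul_div, eq_div_iff hd]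
  constructor <;> intro h <;> linarith

theorem ker_cechCoboundary_eq_map (hd : (m : ℝ) + 2 * n ≠ 0) :
    LinearMap.ker (toLin' (cechCoboundary n m)) =
      (LinearMap.ker (kernelConstraint n m)).map (kernelParam n m) := by
  ext v
  simp only [LinearMap.mem_ker, toLin'_apply, Submodule.mem_map,
    cechCoboundary_mulVec_eq_zero_iff hd]
  constructor
  · intro h
    set c := 2 / ((m : ℝ) + 2 * n) * vertexSum v
    have hv : kernelParam n m (fun j => v (Sum.inl j), fun i => v (Sum.inr (i, 0)), c) = v := by
      ext (j | ⟨i, s⟩)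
      · rfl
      · exact (congrFun (h i) s).symm
    have hS := vertexSum_kernelParam (fun j => v (Sum.inl j), fun i => v (Sum.inr (i, 0)), c)
    rw [hv] at hS
    refine ⟨_, ?_, hv⟩
    change (m : ℝ) * c - 2 * ∑ j, v (Sum.inl j) = 0
    rw [← eq_two_div_mul_add_iff hd, ← hS]
  · rintro ⟨x, hx, rfl⟩ i
    rw [loopPart_kernelParam, vertexSum_kernelParam, ← (eq_two_div_mul_add_iff hd _ _).mpr hx]
    rfl

theorem finrank_ker_kernelConstraint :
    Module.finrank ℝ (LinearMap.ker (kernelConstraint n m)) = if 1 ≤ m then m + n else n + 1 := by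
  split_ifs with hm
  · have hsurj : LinearMap.range (kernelConstraint n m) = ⊤ := by
      refine LinearMap.range_eq_top.mpr fun t => ⟨(0, 0, t / m), ?_⟩
      have : (m : ℝ) ≠ 0 := by positivity
      simp [kernelConstraint, mul_div_cancel₀ t this]
    have hdim := (kernelConstraint n m).finrank_range_add_finrank_ker
    rw [hsurj, finrank_top] at hdim
    simp only [Module.finrank_prod, Module.finrank_fin_fun, Module.finrank_self] at hdim
    omega
  · obtain rfl : m = 0 := by omega
    have hzero : LinearMap.ker (kernelConstraint n 0) = ⊤ :=
      LinearMap.ker_eq_top.mpr (LinearMap.ext fun x => by simp [kernelConstraint])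
    rw [hzero, finrank_top]
    simp only [Module.finrank_prod, Module.finrank_fin_fun, Module.finrank_self]
    omega

theorem finrank_ker_cechCoboundary (hn : 0 < n) :
    Module.finrank ℝ (LinearMap.ker (toLin' (cechCoboundary n m))) =
      if 1 ≤ m then m + n else n + 1 := by
  have hd : (m : ℝ) + 2 * n ≠ 0 := by positivity
  rw [ker_cechCoboundary_eq_map hd, ← finrank_ker_kernelConstraint,
    (Submodule.equivMapOfInjective _ (kernelParam_injective hn) _).finrank_eq]

end CechCoboundary

/-- The Čech coboundary `δ` of the transmission line sheaf on the one-vertex graph with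
`m` open edges and `n` resonant loops has rank `5n` when `m ≥ 1` and `5n − 1` when `m = 0`.
Consequently its kernel has dimension `m + n` (resp. `n + 1`) and its cokernel has
dimension `n` (resp. `n + 1`). -/
theorem cechCoboundary_rank_ker_coker (n m : ℕ) (hn : 1 ≤ n) :
    ((cechCoboundary n m).rank = if 1 ≤ m then 5 * n else 5 * n - 1) ∧
    (Module.finrank ℝ (LinearMap.ker (Matrix.toLin' (cechCoboundary n m))) =
      if 1 ≤ m then m + n else n + 1) ∧
    (Module.finrank ℝ
        ((Fin n × Fin 6 → ℝ) ⧸ LinearMap.range (Matrix.toLin' (cechCoboundary n m))) =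
      if 1 ≤ m then n else n + 1) := by
  have hker := CechCoboundary.finrank_ker_cechCoboundary (m := m) hn
  have hrank := (toLin' (cechCoboundary n m)).finrank_range_add_finrank_ker
  have hcoker := (LinearMap.range (toLin' (cechCoboundary n m))).finrank_quotient_add_finrank
  have hrank_eq : (cechCoboundary n m).rank =
      Module.finrank ℝ (LinearMap.range (toLin' (cechCoboundary n m))) := by
    rw [Matrix.rank, toLin'_apply']
  simp only [Module.finrank_fintype_fun_eq_card, Fintype.card_sum, Fintype.card_prod,
    Fintype.card_fin] at hrank hcoker
  rw [hrank_eq]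
  refine ⟨?_, hker, ?_⟩ <;> split_ifs at hker ⊢ <;> omega
end

section
/- Under the Kirchhoff gluing equations (i)–(iv), the value d₀ is completely determined by the remaining incoming values via the formula d₀ = (nL/(m + n − 2))·(c₁ + ⋯ + c_{m−1}) + ((2 − m)/(m + n − 2))·(d₁ + ⋯ + d_{n−1}). -/
open Finset

/-!
Substituting (i), (ii) and (iv) into (iii) leaves one linear equation in `d₀`, namely
`2 (m + n - 2) d₀ = 2 n L (c₁ + ⋯ + c_{m-1}) + 2 (2 - m) (d₁ + ⋯ + d_{n-1})`
after clearing the denominators `m` and `n`. The factor `2` cancels because in characteristic two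
the nonzero casts `m` and `n` both equal `1`, which would force `m + n - 2 = 0`.
-/

theorem two_ne_zero_of_natCast_add_natCast_sub_two_ne_zero {R : Type*} [Ring R] {m n : ℕ}
    (hm : (m : R) ≠ 0) (hn : (n : R) ≠ 0) (hmn : (m : R) + n - 2 ≠ 0) : (2 : R) ≠ 0 := by
  intro h2
  have cast_eq_one {k : ℕ} (hk : (k : R) ≠ 0) : (k : R) = 1 :=
    (natCast_eq_zero_or_one_of_two_eq_zero k h2).resolve_left hk
  apply hmn
  rw [cast_eq_one hm, cast_eq_one hn, one_add_one_eq_two, sub_self]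

theorem kirchhoff_collapse_eq {F : Type*} [Field F] {μ ν L a b c₀ d₀ C D : F}
    (hμ : μ ≠ 0) (hν : ν ≠ 0) (hμν : μ + ν - 2 ≠ 0) (htwo : (2 : F) ≠ 0) (hL : L ≠ 0)
    (h1 : c₀ = L⁻¹ * a) (h2 : b = 2 / μ * (c₀ + C) - c₀) (h3 : a = 2 / ν * (d₀ + D) - d₀)
    (h4 : d₀ = L * b) :
    d₀ = ν * L / (μ + ν - 2) * C + (2 - μ) / (μ + ν - 2) * D := by
  have hLc : a = L * c₀ := by rw [h1, mul_inv_cancel_left₀ hL]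
  have hμb : μ * b = 2 * (c₀ + C) - μ * c₀ := by rw [h2]; field_simp
  have hνa : ν * a = 2 * (d₀ + D) - ν * d₀ := by rw [h3]; field_simp
  have key : 2 * ((μ + ν - 2) * d₀) = 2 * (ν * L * C + (2 - μ) * D) := by
    linear_combination ν * μ * h4 + ν * L * hμb + (2 - μ) * hνa + (μ - 2) * ν * hLc
  rw [div_mul_eq_mul_div, div_mul_eq_mul_div, ← add_div, eq_div_iff hμν, mul_comm]
  exact mul_left_cancel₀ htwo key

/-- Under the Kirchhoff gluing equations (i)–(iv) arising from collapsing an edge with edge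
endomorphism `L` joining a vertex of degree `m` to a vertex of degree `n`, the value `d₀` is
completely determined by the remaining incoming values:
`d₀ = (nL/(m+n−2))·(c₁ + ⋯ + c_{m−1}) + ((2−m)/(m+n−2))·(d₁ + ⋯ + d_{n−1})`. -/
theorem kirchhoff_collapse_d0 {F : Type*} [Field F] (m n : ℕ) (hm : 1 ≤ m) (hn : 1 ≤ n)
    (hmF : (m : F) ≠ 0) (hnF : (n : F) ≠ 0) (hmnF : (m : F) + (n : F) - 2 ≠ 0)
    (L : F) (hL : L ≠ 0) (c : Fin m → F) (d : Fin n → F) (a b : F)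
    (h1 : c ⟨0, hm⟩ = L⁻¹ * a)
    (h2 : b = (2 / (m : F)) * (∑ i, c i) - c ⟨0, hm⟩)
    (h3 : a = (2 / (n : F)) * (∑ i, d i) - d ⟨0, hn⟩)
    (h4 : d ⟨0, hn⟩ = L * b) :
    d ⟨0, hn⟩ =
      ((n : F) * L / ((m : F) + (n : F) - 2)) * (∑ i ∈ univ.erase ⟨0, hm⟩, c i) +
        ((2 - (m : F)) / ((m : F) + (n : F) - 2)) * (∑ i ∈ univ.erase ⟨0, hn⟩, d i) := by
  rw [← add_sum_erase _ c (mem_univ ⟨0, hm⟩)] at h2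
  rw [← add_sum_erase _ d (mem_univ ⟨0, hn⟩)] at h3
  exact kirchhoff_collapse_eq hmF hnF hmnF
    (two_ne_zero_of_natCast_add_natCast_sub_two_ne_zero hmF hnF hmnF) hL h1 h2 h3 h4
end

section
/- Under the Kirchhoff gluing equations (i)–(iv), for each index 1 ≤ i ≤ n − 1 the outgoing value d_i' := (2/n)·(d₀ + d₁ + ⋯ + d_{n−1}) − d_i satisfies d_i' = (2/(m + n − 2))·(L·c₁ + ⋯ + L·c_{m−1} + d₁ + ⋯ + d_{n−1}) − d_i. In particular, the outgoing values at the merged vertex have exactly the Kirchhoff transmission-line form for a vertex of degree m + n − 2 with the endomorphism L composed onto the c-side inputs. -/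
open Finset

/-! Both gluing equations say that `L·c₀ + d₀` equals the outgoing common value
`s = (2/n)·Σ d = (2/m)·L·Σ c` of either endpoint. Hence twice the input sum at the merged vertex
is `2·(L·Σ c + Σ d - (L·c₀ + d₀)) = m·s + n·s - 2·s`, so its common value is again `s`. -/

theorem two_div_mul_sub_add_sub_of_two_div_mul_eq {F : Type*} [Field F] {m n X Y p q : F}
    (hm : m ≠ 0) (hn : n ≠ 0) (hmn : m + n - 2 ≠ 0)
    (hXY : 2 / m * X = 2 / n * Y) (hpq : p + q = 2 / n * Y) :
    2 / (m + n - 2) * (X - p + (Y - q)) = 2 / n * Y := by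
  have hX : 2 * X = m * (2 / n * Y) := by
    rw [← hXY]; field_simp
  have hY : 2 * Y = n * (2 / n * Y) := by field_simp
  rw [div_mul_eq_mul_div, div_eq_iff hmn]
  linear_combination hX + hY - 2 * hpq

/-- Under the Kirchhoff gluing equations (i)–(iv), for each `1 ≤ i ≤ n − 1` the outgoing
value `dᵢ' := (2/n)·(d₀ + ⋯ + d_{n−1}) − dᵢ` satisfies
`dᵢ' = (2/(m+n−2))·(L·c₁ + ⋯ + L·c_{m−1} + d₁ + ⋯ + d_{n−1}) − dᵢ`, i.e. the outgoing
values at the merged vertex have the Kirchhoff transmission-line form for a vertex of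
degree `m + n − 2` with the endomorphism `L` composed onto the `c`-side inputs. -/
theorem kirchhoff_collapse_outgoing {F : Type*} [Field F] (m n : ℕ) (hm : 1 ≤ m) (hn : 1 ≤ n)
    (hmF : (m : F) ≠ 0) (hnF : (n : F) ≠ 0) (hmnF : (m : F) + (n : F) - 2 ≠ 0)
    (L : F) (hL : L ≠ 0) (c : Fin m → F) (d : Fin n → F) (a b : F)
    (h1 : c ⟨0, hm⟩ = L⁻¹ * a)
    (h2 : b = (2 / (m : F)) * (∑ i, c i) - c ⟨0, hm⟩)
    (h3 : a = (2 / (n : F)) * (∑ i, d i) - d ⟨0, hn⟩)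
    (h4 : d ⟨0, hn⟩ = L * b) :
    ∀ i : Fin n, i ≠ ⟨0, hn⟩ →
      (2 / (n : F)) * (∑ j, d j) - d i =
        (2 / ((m : F) + (n : F) - 2)) *
            ((∑ j ∈ univ.erase ⟨0, hm⟩, L * c j) + ∑ j ∈ univ.erase ⟨0, hn⟩, d j) -
          d i := by
  intro i _
  have ha : a = L * c ⟨0, hm⟩ := by rw [h1, mul_inv_cancel_left₀ hL]
  have hd : L * c ⟨0, hm⟩ + d ⟨0, hn⟩ = 2 / n * ∑ j, d j := by rw [← ha, h3]; ring
  have hc : L * c ⟨0, hm⟩ + d ⟨0, hn⟩ = 2 / m * (L * ∑ j, c j) := by rw [h4, h2]; ring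
  rw [← mul_sum, sum_erase_eq_sub (mem_univ _), sum_erase_eq_sub (mem_univ _), mul_sub,
    two_div_mul_sub_add_sub_of_two_div_mul_eq hmF hnF hmnF (hc.symm.trans hd) hd]
end

section
/- The set of tuples (c₀, …, c_{m−1}, d₀, …, d_{n−1}, a, b) ∈ 𝔽^{m+n+2} satisfying the four Kirchhoff gluing equations (i)–(iv) is a linear subspace of dimension exactly m + n − 2; equivalently, the 4 × (m + n + 2) coefficient matrix of the system has rank 4. Concretely, the values c₁, …, c_{m−1}, d₁, …, d_{n−1} may be chosen freely and then c₀, d₀, a, b are uniquely determined. -/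
/-!
Once `c₁, …, c_{m-1}` and `d₁, …, d_{n-1}` are fixed, the gluing equations form a cycle
`c₀ = L⁻¹ a`, `b = (2/m - 1) c₀ + s`, `a = (2/n - 1) d₀ + t`, `d₀ = L b` in the four remaining
unknowns. Going once around the cycle gives `δ c₀ = const` with
`δ = 1 - (2/m - 1)(2/n - 1) = 2(m + n - 2)/(mn)`, which is nonzero (in characteristic two the
hypotheses force `m + n - 2 = 0`), so the system has exactly one solution. Hence restricting
to the free coordinates is a linear isomorphism onto `𝔽^{m-1} × 𝔽^{n-1}`.
-/

open Finset Function

theorem two_ne_zero_of_natCast_ne_zero {F : Type*} [Field F] {m n : ℕ} (hmF : (m : F) ≠ 0)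
    (hnF : (n : F) ≠ 0) (hmnF : (m : F) + (n : F) - 2 ≠ 0) : (2 : F) ≠ 0 := by
  intro h2
  have := CharTwo.of_one_ne_zero_of_two_eq_zero one_ne_zero h2
  have cast_eq_one {k : ℕ} (hk : (k : F) ≠ 0) : (k : F) = 1 := by
    rw [CharP.cast_eq_mod F 2] at hk ⊢
    rcases Nat.mod_two_eq_zero_or_one k with h | h <;> simp_all
  exact hmnF (by rw [cast_eq_one hmF, cast_eq_one hnF]; ring)

theorem two_div_sub_one_mul_two_div_sub_one_ne_one {F : Type*} [Field F] {x y : F}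
    (hx : x ≠ 0) (hy : y ≠ 0) (h2 : (2 : F) ≠ 0) (hxy : x + y - 2 ≠ 0) :
    (2 / x - 1) * (2 / y - 1) ≠ 1 := by
  intro h
  field_simp at h
  exact mul_ne_zero h2 hxy (by linear_combination -h)

theorem existsUnique_cycle_solution {F : Type*} [Field F] {k l μ ν : F}
    (h : k * l * (μ - 1) * (ν - 1) ≠ 1) (C D : F) :
    ∃! v : F × F × F × F, v.1 = k * v.2.2.1 ∧ v.2.2.2 = μ * (v.1 + C) - v.1 ∧
      v.2.2.1 = ν * (v.2.1 + D) - v.2.1 ∧ v.2.1 = l * v.2.2.2 := by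
  set δ := 1 - k * l * (μ - 1) * (ν - 1)
  have hδ : δ ≠ 0 := sub_ne_zero.2 (Ne.symm h)
  set x := k * (l * (ν - 1) * μ * C + ν * D) / δ
  have hxδ : x * δ = k * (l * (ν - 1) * μ * C + ν * D) := div_mul_cancel₀ _ hδ
  refine ⟨(x, l * ((μ - 1) * x + μ * C), (ν - 1) * (l * ((μ - 1) * x + μ * C)) + ν * D,
    (μ - 1) * x + μ * C), ⟨by linear_combination hxδ, by ring, by ring, rfl⟩, ?_⟩
  rintro ⟨x', y', a', b'⟩ ⟨h₁, h₂, h₃, h₄⟩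
  dsimp only at h₁ h₂ h₃ h₄
  obtain rfl : x' = x := by
    rw [eq_div_iff hδ]
    linear_combination h₁ + k * h₃ + k * (ν - 1) * h₄ + k * l * (ν - 1) * h₂
  simp only [Prod.mk.injEq, true_and]
  exact ⟨by linear_combination h₄ + l * h₂,
    by linear_combination h₃ + (ν - 1) * (h₄ + l * h₂), by linear_combination h₂⟩

theorem sum_eq_add_sum_erase_of_eq_off {ι M : Type*} [Fintype ι] [DecidableEq ι]
    [AddCommMonoid M] {c f : ι → M} {i₀ : ι} (h : ∀ i, i ≠ i₀ → c i = f i) :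
    ∑ i, c i = c i₀ + ∑ i ∈ univ.erase i₀, f i := by
  rw [← add_sum_erase _ _ (mem_univ i₀)]
  exact congrArg _ (sum_congr rfl fun i hi => h i (ne_of_mem_erase hi))

section Gluing

variable {F ι κ : Type*} [Field F] [Fintype ι] [Fintype κ]

/-- `i₀` and `j₀` are the two ends of the collapsed edge; the paper's equations are the case
`μ = 2/m`, `ν = 2/n`, `k = L⁻¹`, `l = L`. -/
def gluingSolutions (i₀ : ι) (j₀ : κ) (μ ν k l : F) :
    Submodule F ((ι → F) × (κ → F) × F × F) where
  carrier := {p | p.1 i₀ = k * p.2.2.1 ∧ p.2.2.2 = μ * (∑ i, p.1 i) - p.1 i₀ ∧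
    p.2.2.1 = ν * (∑ j, p.2.1 j) - p.2.1 j₀ ∧ p.2.1 j₀ = l * p.2.2.2}
  add_mem' := by
    rintro p q ⟨hp₁, hp₂, hp₃, hp₄⟩ ⟨hq₁, hq₂, hq₃, hq₄⟩
    simp only [Set.mem_ofPred_eq, Prod.fst_add, Prod.snd_add, Pi.add_apply, sum_add_distrib]
    exact ⟨by linear_combination hp₁ + hq₁, by linear_combination hp₂ + hq₂,
      by linear_combination hp₃ + hq₃, by linear_combination hp₄ + hq₄⟩
  zero_mem' := by simp
  smul_mem' := by
    rintro r p ⟨h₁, h₂, h₃, h₄⟩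
    simp only [Set.mem_ofPred_eq, Prod.smul_fst, Prod.smul_snd, Pi.smul_apply, smul_eq_mul,
      ← mul_sum]
    exact ⟨by linear_combination r * h₁, by linear_combination r * h₂,
      by linear_combination r * h₃, by linear_combination r * h₄⟩

@[simp]
theorem mem_gluingSolutions {i₀ : ι} {j₀ : κ} {μ ν k l : F} {p : (ι → F) × (κ → F) × F × F} :
    p ∈ gluingSolutions i₀ j₀ μ ν k l ↔ p.1 i₀ = k * p.2.2.1 ∧
      p.2.2.2 = μ * (∑ i, p.1 i) - p.1 i₀ ∧ p.2.2.1 = ν * (∑ j, p.2.1 j) - p.2.1 j₀ ∧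
      p.2.1 j₀ = l * p.2.2.2 :=
  Iff.rfl

theorem existsUnique_mem_gluingSolutions {i₀ : ι} {j₀ : κ} {μ ν k l : F}
    (h : k * l * (μ - 1) * (ν - 1) ≠ 1) (cf : ι → F) (df : κ → F) :
    ∃! p, p ∈ gluingSolutions i₀ j₀ μ ν k l ∧ (∀ i, i ≠ i₀ → p.1 i = cf i) ∧
      (∀ j, j ≠ j₀ → p.2.1 j = df j) := by
  classical
  obtain ⟨⟨x, y, a, b⟩, ⟨h₁, h₂, h₃, h₄⟩, hunique⟩ := existsUnique_cycle_solution h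
    (∑ i ∈ univ.erase i₀, cf i) (∑ j ∈ univ.erase j₀, df j)
  have hc : ∀ i, i ≠ i₀ → update cf i₀ x i = cf i := fun i hi => update_of_ne hi _ _
  have hd : ∀ j, j ≠ j₀ → update df j₀ y j = df j := fun j hj => update_of_ne hj _ _
  refine ⟨(update cf i₀ x, update df j₀ y, a, b), ⟨?_, hc, hd⟩, ?_⟩
  · simp only [mem_gluingSolutions]
    rw [sum_eq_add_sum_erase_of_eq_off hc, sum_eq_add_sum_erase_of_eq_off hd, update_self,
      update_self]
    exact ⟨h₁, h₂, h₃, h₄⟩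
  rintro ⟨c, d, a', b'⟩ ⟨⟨h₁', h₂', h₃', h₄'⟩, hc', hd'⟩
  rw [sum_eq_add_sum_erase_of_eq_off hc'] at h₂'
  rw [sum_eq_add_sum_erase_of_eq_off hd'] at h₃'
  have hunique' := hunique (c i₀, d j₀, a', b') ⟨h₁', h₂', h₃', h₄'⟩
  simp only [Prod.mk.injEq] at hunique'
  obtain ⟨hx, hy, rfl, rfl⟩ := hunique'
  simp only [Prod.mk.injEq, and_true]
  exact ⟨eq_update_iff.2 ⟨hx, hc'⟩, eq_update_iff.2 ⟨hy, hd'⟩⟩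

theorem finrank_eq_of_existsUnique_extension {i₀ : ι} {j₀ : κ}
    {S : Submodule F ((ι → F) × (κ → F) × F × F)}
    (h : ∀ (cf : ι → F) (df : κ → F), ∃! p, p ∈ S ∧ (∀ i, i ≠ i₀ → p.1 i = cf i) ∧
      (∀ j, j ≠ j₀ → p.2.1 j = df j)) :
    Module.finrank F S = (Fintype.card ι - 1) + (Fintype.card κ - 1) := by
  classical
  let restrict : S →ₗ[F] ({i // i ≠ i₀} → F) × ({j // j ≠ j₀} → F) :=
    { toFun p := (fun i => p.1.1 i, fun j => p.1.2.1 j)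
      map_add' _ _ := rfl
      map_smul' _ _ := rfl }
  have hrestrict : Bijective restrict := by
    refine ⟨fun p q hpq => Subtype.ext ((h p.1.1 p.1.2.1).unique
      ⟨p.2, fun _ _ => rfl, fun _ _ => rfl⟩ ⟨q.2, fun i hi => ?_, fun j hj => ?_⟩), ?_⟩
    · exact (congrFun (congrArg Prod.fst hpq) ⟨i, hi⟩).symm
    · exact (congrFun (congrArg Prod.snd hpq) ⟨j, hj⟩).symm
    rintro ⟨u, v⟩
    obtain ⟨cf, rfl⟩ := LinearMap.funLeft_surjective_of_injective F F _ Subtype.val_injective u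
    obtain ⟨df, rfl⟩ := LinearMap.funLeft_surjective_of_injective F F _ Subtype.val_injective v
    obtain ⟨p, ⟨hp, hc, hd⟩, -⟩ := h cf df
    exact ⟨⟨p, hp⟩, Prod.ext (funext fun i => hc i i.2) (funext fun j => hd j j.2)⟩
  rw [(LinearEquiv.ofBijective restrict hrestrict).finrank_eq]
  simp [Module.finrank_prod]

end Gluing

/-- The set of tuples `(c, d, a, b) ∈ 𝔽^m × 𝔽^n × 𝔽 × 𝔽` satisfying the four Kirchhoff
gluing equations (i)–(iv) is a linear subspace of dimension exactly `m + n − 2`; concretely,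
the values `c₁, …, c_{m−1}, d₁, …, d_{n−1}` may be chosen freely and then `c₀, d₀, a, b`
are uniquely determined. -/
theorem kirchhoff_collapse_solution_space {F : Type*} [Field F] (m n : ℕ)
    (hm : 1 ≤ m) (hn : 1 ≤ n)
    (hmF : (m : F) ≠ 0) (hnF : (n : F) ≠ 0) (hmnF : (m : F) + (n : F) - 2 ≠ 0)
    (L : F) (hL : L ≠ 0) :
    ∃ S : Submodule F ((Fin m → F) × (Fin n → F) × F × F),
      (∀ p : (Fin m → F) × (Fin n → F) × F × F,
        p ∈ S ↔
          (p.1 ⟨0, hm⟩ = L⁻¹ * p.2.2.1 ∧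
           p.2.2.2 = (2 / (m : F)) * (∑ i, p.1 i) - p.1 ⟨0, hm⟩ ∧
           p.2.2.1 = (2 / (n : F)) * (∑ i, p.2.1 i) - p.2.1 ⟨0, hn⟩ ∧
           p.2.1 ⟨0, hn⟩ = L * p.2.2.2)) ∧
      Module.finrank F S = m + n - 2 ∧
      (∀ (cf : Fin m → F) (df : Fin n → F),
        ∃! p : (Fin m → F) × (Fin n → F) × F × F,
          p ∈ S ∧ (∀ i : Fin m, i ≠ ⟨0, hm⟩ → p.1 i = cf i) ∧
            (∀ i : Fin n, i ≠ ⟨0, hn⟩ → p.2.1 i = df i)) := by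
  have hcycle : L⁻¹ * L * (2 / (m : F) - 1) * (2 / (n : F) - 1) ≠ 1 := by
    rw [inv_mul_cancel₀ hL, one_mul]
    exact two_div_sub_one_mul_two_div_sub_one_ne_one hmF hnF
      (two_ne_zero_of_natCast_ne_zero hmF hnF hmnF) hmnF
  have hunique := existsUnique_mem_gluingSolutions (i₀ := (⟨0, hm⟩ : Fin m))
    (j₀ := (⟨0, hn⟩ : Fin n)) hcycle
  refine ⟨gluingSolutions _ _ _ _ _ _, fun _ => mem_gluingSolutions, ?_, hunique⟩
  rw [finrank_eq_of_existsUnique_extension hunique, Fintype.card_fin, Fintype.card_fin]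
  omega
end

section
/- Let k ≥ 3 be an integer and 𝔽 a field in which the images of 2, k and k − 2 are nonzero, and let L ∈ 𝔽 be nonzero. Define the linear map Δ : 𝔽² × 𝔽^k → 𝔽⁴ by Δ(a, b, c₁, …, c_k) = (c₂ − L·a, c₁ − L⁻¹·b, a − (2/k)·(c₁ + ⋯ + c_k) + c₁, b − (2/k)·(c₁ + ⋯ + c_k) + c₂). Then the kernel of Δ has dimension k − 1 if L = 1 and dimension k − 2 if L ≠ 1. -/
/-!
With `c 1 = L a` and `b = L (c 0)`, the difference of the last two equations is
`(1 - L) (a + c 0) = 0`. If `L ≠ 1`, then `a = -c 0`, the Kirchhoff sum `∑ i, c i` vanishes, and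
`a, b, c 0, c 1` are determined by the `k - 2` free values `c 2, …, c (k - 1)`. If `L = 1`, then
`a = c 1`, `b = c 0`, and the only remaining condition `(k - 2) (a + b) = 2 ∑_{i ≥ 2} c i` leaves
`b, c 2, …, c (k - 1)` free. In both cases the kernel is the range of an explicit linear section
whose left inverse reads off the free coordinates.
-/

theorem Submodule.exists_iff_finrank_eq_of_leftInverse {R V W : Type*} [Semiring R]
    [AddCommMonoid V] [Module R V] [AddCommMonoid W] [Module R W]
    (φ : W →ₗ[R] V) (π : V →ₗ[R] W) (hπφ : ∀ w, π (φ w) = w) (P : V → Prop)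
    (hφ : ∀ w, P (φ w)) (hπ : ∀ v, P v → φ (π v) = v) :
    ∃ S : Submodule R V, (∀ v, v ∈ S ↔ P v) ∧ Module.finrank R S = Module.finrank R W :=
  ⟨LinearMap.range φ, fun v => ⟨by rintro ⟨w, rfl⟩; exact hφ w, fun h => ⟨π v, hπ v h⟩⟩,
    LinearMap.finrank_range_of_inj (Function.LeftInverse.injective hπφ)⟩

namespace LoopSheaf

variable {F : Type*} [Field F] {n : ℕ}

/-- `c 0` and `c 1` are the incoming values from the two ends of the loop; the four conditions
say `Δ (a, b, c) = 0`. -/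
def IsGlobalSection (L : F) : F × F × (Fin (n + 2) → F) → Prop
  | (a, b, c) =>
    c 1 - L * a = 0 ∧ c 0 - L⁻¹ * b = 0 ∧
    a - (2 / ((n + 2 : ℕ) : F)) * (∑ i, c i) + c 0 = 0 ∧
    b - (2 / ((n + 2 : ℕ) : F)) * (∑ i, c i) + c 1 = 0

def sumCoords : (Fin n → F) →ₗ[F] F := ∑ i, LinearMap.proj i

@[simp] lemma sumCoords_apply (c : Fin n → F) : sumCoords c = ∑ i, c i := by
  simp [sumCoords]

def outerValues : F × F × (Fin (n + 2) → F) →ₗ[F] Fin n → F :=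
  LinearMap.funLeft F F (Fin.succ ∘ Fin.succ) ∘ₗ LinearMap.snd F F _ ∘ₗ LinearMap.snd F F _

@[simp] lemma outerValues_apply (a b : F) (c : Fin (n + 2) → F) :
    outerValues (a, b, c) = fun i => c i.succ.succ := rfl

lemma vecCons_vecCons_outerValues (a b : F) (c : Fin (n + 2) → F) :
    Matrix.vecCons (c 0) (Matrix.vecCons (c 1) (outerValues (a, b, c))) = c := by
  ext i
  refine Fin.cases ?_ (Fin.cases ?_ fun _ => ?_) i <;> simp

lemma sum_eq_add_add_sum_outerValues (a b : F) (c : Fin (n + 2) → F) :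
    ∑ i, c i = c 0 + (c 1 + ∑ i, outerValues (a, b, c) i) := by
  simp [Fin.sum_univ_succ]

section Resonant

variable (n) in
def resonantSection : F × (Fin n → F) →ₗ[F] F × F × (Fin (n + 2) → F) :=
  let a := (2 / (((n + 2 : ℕ) : F) - 2)) • (sumCoords ∘ₗ LinearMap.snd F F _) - LinearMap.fst F F _
  a.prod ((LinearMap.fst F F _).prod ((LinearMap.fst F F _).vecCons (a.vecCons (LinearMap.snd F F _))))

lemma resonantSection_apply (x : F) (c : Fin n → F) :
    resonantSection n (x, c) =
      (2 / (((n + 2 : ℕ) : F) - 2) * ∑ i, c i - x, x,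
        Matrix.vecCons x (Matrix.vecCons (2 / (((n + 2 : ℕ) : F) - 2) * ∑ i, c i - x) c)) := by
  simp [resonantSection]

def resonantParams : F × F × (Fin (n + 2) → F) →ₗ[F] F × (Fin n → F) :=
  (LinearMap.fst F F _ ∘ₗ LinearMap.snd F F _).prod outerValues

lemma resonantParams_apply (a b : F) (c : Fin (n + 2) → F) :
    resonantParams (a, b, c) = (b, outerValues (a, b, c)) := rfl

lemma resonantParams_resonantSection (w : F × (Fin n → F)) :
    resonantParams (resonantSection n w) = w := by
  obtain ⟨x, c⟩ := w
  simp [resonantParams, resonantSection_apply]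

variable (hk : ((n + 2 : ℕ) : F) ≠ 0) (hk2 : ((n + 2 : ℕ) : F) - 2 ≠ 0)
include hk hk2

lemma isGlobalSection_resonantSection (w : F × (Fin n → F)) :
    IsGlobalSection 1 (resonantSection n w) := by
  obtain ⟨x, c⟩ := w
  simp only [resonantSection_apply, IsGlobalSection, Matrix.cons_val_zero, Matrix.cons_val_one,
    Fin.sum_univ_succ, Matrix.cons_val_succ, inv_one, one_mul, sub_self, true_and]
  constructor <;> (field_simp; ring)

lemma resonantSection_resonantParams {v : F × F × (Fin (n + 2) → F)}
    (hv : IsGlobalSection 1 v) : resonantSection n (resonantParams v) = v := by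
  obtain ⟨a, b, c⟩ := v
  obtain ⟨h1, h0, h3, -⟩ := hv
  obtain rfl : a = c 1 := by linear_combination -h1
  obtain rfl : b = c 0 := by linear_combination -h0
  rw [sum_eq_add_add_sum_outerValues (c 1) (c 0)] at h3
  have ha : 2 / (((n + 2 : ℕ) : F) - 2) * ∑ i, outerValues (c 1, c 0, c) i - c 0 = c 1 := by
    field_simp at h3 ⊢
    linear_combination -h3
  rw [resonantParams_apply, resonantSection_apply, ha, vecCons_vecCons_outerValues]

end Resonant

section Nonresonant

variable (n) in
def nonresonantSection (L : F) : (Fin n → F) →ₗ[F] F × F × (Fin (n + 2) → F) :=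
  let t := (L - 1)⁻¹ • sumCoords
  (-t).prod ((L • t).prod (t.vecCons ((-(L • t)).vecCons LinearMap.id)))

lemma nonresonantSection_apply (L : F) (c : Fin n → F) :
    nonresonantSection n L c =
      (-((∑ i, c i) / (L - 1)), L * ((∑ i, c i) / (L - 1)),
        Matrix.vecCons ((∑ i, c i) / (L - 1)) (Matrix.vecCons (-(L * ((∑ i, c i) / (L - 1)))) c)) := by
  simp [nonresonantSection, div_eq_inv_mul]

lemma outerValues_nonresonantSection (L : F) (c : Fin n → F) :
    outerValues (nonresonantSection n L c) = c := by
  simp [nonresonantSection_apply]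

variable {L : F} (hL : L ≠ 0) (hL1 : L ≠ 1)
include hL hL1

lemma isGlobalSection_nonresonantSection (c : Fin n → F) :
    IsGlobalSection L (nonresonantSection n L c) := by
  have hL1' : L - 1 ≠ 0 := sub_ne_zero.2 hL1
  simp only [nonresonantSection_apply, IsGlobalSection, Fin.sum_univ_succ, Matrix.cons_val_zero,
    Matrix.cons_val_one, Matrix.cons_val_succ]
  refine ⟨by ring, by field_simp; ring, ?_, ?_⟩ <;> (field_simp; ring)

lemma nonresonantSection_outerValues (h2 : (2 : F) ≠ 0) (hk : ((n + 2 : ℕ) : F) ≠ 0)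
    {v : F × F × (Fin (n + 2) → F)} (hv : IsGlobalSection L v) :
    nonresonantSection n L (outerValues v) = v := by
  obtain ⟨a, b, c⟩ := v
  obtain ⟨h1, h0, h3, h4⟩ := hv
  obtain rfl : b = L * c 0 := by
    field_simp at h0
    linear_combination -h0
  have hc1 : c 1 = L * a := by linear_combination h1
  have hloop : (1 - L) * (a + c 0) = 0 := by linear_combination h3 - h4 + hc1
  obtain rfl : a = -c 0 := by
    linear_combination (mul_eq_zero.1 hloop).resolve_left (sub_ne_zero.2 hL1.symm)
  have hsum : ∑ i, c i = 0 := by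
    have : 2 / ((n + 2 : ℕ) : F) * ∑ i, c i = 0 := by linear_combination -h3
    exact (mul_eq_zero.1 this).resolve_left (div_ne_zero h2 hk)
  rw [sum_eq_add_add_sum_outerValues (-c 0) (L * c 0), hc1] at hsum
  have hc0 : (∑ i, outerValues (-c 0, L * c 0, c) i) / (L - 1) = c 0 := by
    rw [div_eq_iff (sub_ne_zero.2 hL1)]
    linear_combination hsum
  rw [nonresonantSection_apply, hc0, show -(L * c 0) = c 1 by linear_combination -hc1,
    vecCons_vecCons_outerValues]

end Nonresonant
end LoopSheaf

open LoopSheaf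

/-- Let `k ≥ 3`, let `𝔽` be a field in which `2`, `k` and `k − 2` are nonzero, and let
`L ∈ 𝔽` be nonzero. The kernel of the Mayer–Vietoris difference map
`Δ(a, b, c₁, …, c_k) = (c₂ − L·a, c₁ − L⁻¹·b, a − (2/k)·Σc + c₁, b − (2/k)·Σc + c₂)`
has dimension `k − 1` if `L = 1` and dimension `k − 2` if `L ≠ 1`. -/
theorem mayerVietoris_kernel_dim {F : Type*} [Field F] [DecidableEq F] (k : ℕ) (hk : 3 ≤ k)
    (h2 : (2 : F) ≠ 0) (hkF : (k : F) ≠ 0) (hk2 : (k : F) - 2 ≠ 0) (L : F) (hL : L ≠ 0) :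
    ∃ S : Submodule F (F × F × (Fin k → F)),
      (∀ (a b : F) (c : Fin k → F),
        (a, b, c) ∈ S ↔
          (c ⟨1, by omega⟩ - L * a = 0 ∧
           c ⟨0, by omega⟩ - L⁻¹ * b = 0 ∧
           a - (2 / (k : F)) * (∑ i, c i) + c ⟨0, by omega⟩ = 0 ∧
           b - (2 / (k : F)) * (∑ i, c i) + c ⟨1, by omega⟩ = 0)) ∧
      Module.finrank F S = if L = 1 then k - 1 else k - 2 := by
  obtain ⟨n, rfl⟩ : ∃ n, k = n + 2 := ⟨k - 2, by omega⟩
  obtain ⟨S, hS, hdim⟩ : ∃ S : Submodule F (F × F × (Fin (n + 2) → F)),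
      (∀ v, v ∈ S ↔ IsGlobalSection L v) ∧
        Module.finrank F S = if L = 1 then n + 1 else n := by
    split_ifs with hL1
    · subst hL1
      simpa [add_comm] using Submodule.exists_iff_finrank_eq_of_leftInverse _ _
        resonantParams_resonantSection _ (isGlobalSection_resonantSection hkF hk2)
        fun _ => resonantSection_resonantParams hkF hk2
    · simpa using Submodule.exists_iff_finrank_eq_of_leftInverse _ _
        (outerValues_nonresonantSection L) _ (isGlobalSection_nonresonantSection hL hL1)
        fun _ => nonresonantSection_outerValues hL hL1 h2 hkF
  exact ⟨S, fun _ _ _ => hS _, hdim.trans (by split_ifs <;> rfl)⟩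
end

section
/- Let 𝔽 be a field and L ∈ 𝔽 nonzero. Define the linear map Δ : 𝔽² × 𝔽² → 𝔽⁴ by Δ(a, b, c₁, c₂) = (c₂ − L·a, c₁ − L⁻¹·b, a − c₂, b − c₁). Then the kernel of Δ is trivial (dimension 0) if L ≠ 1, and has dimension 2 if L = 1. -/
/-!
A vector in the kernel of `Δ` is determined by the wave values `(a, b)` on the interval, since
the vertex just exchanges them: `c₂ = a` and `c₁ = b`. The remaining equations say that a wave
returns unchanged after one trip around the loop, `L • a = a` and `L⁻¹ • b = b`. So the kernel is
the product of the fixed spaces of the scalars `L` and `L⁻¹`, each of which is everything when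
the scalar is `1` and zero otherwise.
-/

open Module LinearMap

section

variable {F V : Type*} [Field F] [AddCommGroup V] [Module F V]

def loopDifference (L : F) : (V × V × V × V) →ₗ[F] (V × V × V × V) where
  toFun p := (p.2.2.2 - L • p.1, p.2.2.1 - L⁻¹ • p.2.1, p.1 - p.2.2.2, p.2.1 - p.2.2.1)
  map_add' p q := by
    ext <;> simp only [Prod.fst_add, Prod.snd_add, smul_add] <;> abel
  map_smul' m p := by
    ext <;> simp only [Prod.smul_fst, Prod.smul_snd, RingHom.id_apply, smul_sub,
      smul_comm m L, smul_comm m L⁻¹]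

theorem mem_ker_loopDifference {L : F} {a b c₁ c₂ : V} :
    (a, b, c₁, c₂) ∈ ker (loopDifference L) ↔ c₁ = b ∧ c₂ = a ∧ L • a = a ∧ L⁻¹ • b = b := by
  simp only [loopDifference, mem_ker, LinearMap.coe_mk, AddHom.coe_mk, Prod.mk_eq_zero,
    sub_eq_zero]
  constructor
  · rintro ⟨hLa, hb, ha, hc⟩
    exact ⟨hc.symm, ha.symm, hLa.symm.trans ha.symm, hb.symm.trans hc.symm⟩
  · rintro ⟨rfl, rfl, hLa, hb⟩
    exact ⟨hLa.symm, hb.symm, rfl, rfl⟩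

theorem fixedSubmodule_smul_id [DecidableEq F] (c : F) :
    (c • LinearMap.id : V →ₗ[F] V).fixedSubmodule = if c = 1 then ⊤ else ⊥ := by
  have hsub : c • LinearMap.id - LinearMap.id = (c - 1) • (LinearMap.id : V →ₗ[F] V) := by
    rw [sub_smul, one_smul]
  rw [fixedSubmodule_eq_ker, hsub, ker_smul']
  split_ifs with hc
  · simp [hc]
  · simp [sub_ne_zero.mpr hc]

theorem finrank_fixedSubmodule_smul_id [DecidableEq F] (c : F) :
    finrank F (c • LinearMap.id : V →ₗ[F] V).fixedSubmodule =
      if c = 1 then finrank F V else 0 := by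
  by_cases hc : c = 1
  · rw [fixedSubmodule_smul_id, if_pos hc, if_pos hc, finrank_top]
  · rw [fixedSubmodule_smul_id, if_neg hc, if_neg hc, finrank_bot]

def kerLoopDifferenceEquiv (L : F) :
    ker (loopDifference L : (V × V × V × V) →ₗ[F] _) ≃ₗ[F]
      (L • LinearMap.id : V →ₗ[F] V).fixedSubmodule ×
        (L⁻¹ • LinearMap.id : V →ₗ[F] V).fixedSubmodule where
  toFun p := (⟨p.1.1, mem_fixedSubmodule_iff.mpr (mem_ker_loopDifference.mp p.2).2.2.1⟩,
    ⟨p.1.2.1, mem_fixedSubmodule_iff.mpr (mem_ker_loopDifference.mp p.2).2.2.2⟩)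
  invFun q := ⟨(q.1, q.2, q.2, q.1),
    mem_ker_loopDifference.mpr
      ⟨rfl, rfl, mem_fixedSubmodule_iff.mp q.1.2, mem_fixedSubmodule_iff.mp q.2.2⟩⟩
  map_add' _ _ := rfl
  map_smul' _ _ := rfl
  left_inv := by
    rintro ⟨⟨a, b, c₁, c₂⟩, hp⟩
    obtain ⟨rfl, rfl, -⟩ := mem_ker_loopDifference.mp hp
    rfl
  right_inv _ := rfl

theorem finrank_ker_loopDifference [DecidableEq F] [FiniteDimensional F V] (L : F) :
    finrank F (ker (loopDifference L : (V × V × V × V) →ₗ[F] _)) =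
      if L = 1 then 2 * finrank F V else 0 := by
  rw [(kerLoopDifferenceEquiv L).finrank_eq, finrank_prod, finrank_fixedSubmodule_smul_id,
    finrank_fixedSubmodule_smul_id]
  simp only [inv_eq_one]
  split_ifs <;> omega

end

theorem mayerVietoris_kernel_dim_degree_two_general {F : Type*} [Field F] [DecidableEq F]
    (L : F) :
    ∃ S : Submodule F (F × F × F × F),
      (∀ a b c₁ c₂ : F,
        (a, b, c₁, c₂) ∈ S ↔
          (c₂ - L * a = 0 ∧ c₁ - L⁻¹ * b = 0 ∧ a - c₂ = 0 ∧ b - c₁ = 0)) ∧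
      Module.finrank F S = if L = 1 then 2 else 0 := by
  refine ⟨ker (loopDifference L), fun a b c₁ c₂ => ?_, ?_⟩
  · simp [loopDifference, Prod.ext_iff]
  · rw [finrank_ker_loopDifference, finrank_self, mul_one]

/-- Let `𝔽` be a field and `L ∈ 𝔽` nonzero. The kernel of the Mayer–Vietoris difference map
`Δ(a, b, c₁, c₂) = (c₂ − L·a, c₁ − L⁻¹·b, a − c₂, b − c₁)` is trivial (dimension `0`) if
`L ≠ 1`, and has dimension `2` if `L = 1`. -/
theorem mayerVietoris_kernel_dim_degree_two {F : Type*} [Field F] [DecidableEq F]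
    (L : F) (hL : L ≠ 0) :
    ∃ S : Submodule F (F × F × F × F),
      (∀ a b c₁ c₂ : F,
        (a, b, c₁, c₂) ∈ S ↔
          (c₂ - L * a = 0 ∧ c₁ - L⁻¹ * b = 0 ∧ a - c₂ = 0 ∧ b - c₁ = 0)) ∧
      Module.finrank F S = if L = 1 then 2 else 0 :=
  mayerVietoris_kernel_dim_degree_two_general L
end
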